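/- Let F be a field, n a positive integer, and L = {(i₁, j₁)} a 1-step ladder on n with i₁ ≥ j₁. Set n₁ = j₁ - 1, n₂ = i₁ - j₁ + 1, n₃ = n - i₁. Let μ : M_L ⊗_F M_L → M_L be the linear map induced by (x,y) ↦ [x,y] = xy - yx. Then the dimension of Ker μ over F equals n₁²n₂² + 2n₁²n₂n₃ + n₁²n₃² + 2n₁n₂³ + 4n₁n₂²n₃ + 2n₁n₂n₃² - n₁n₂ - n₁n₃ + n₂⁴ + 2n₂³n₃ + n₂²n₃² - n₂² - n₂n₃ + 1. -/

import Mathlib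

/-!
`M_L` is spanned by the matrix units `e_ij` on the rectangle `R × C = [1, i₁] × [j₁, n]`, so it
has dimension `d = |R| |C| = (n₁ + n₂)(n₂ + n₃)`. Since `i₁ ≥ j₁`, the pivot `k = j₁` lies in
`R ∩ C`. Every bracket has trace zero, so `e_kk ∉ im μ`; conversely
`e_ij = [e_ik, e_kj] + δ_ij e_kk`, so `im μ` together with `e_kk` spans `M_L`. Hence
`dim im μ = d - 1`, and rank–nullity gives `dim ker μ = d² - d + 1`.
-/

open Matrix TensorProduct

/-- The ladder matrices on the 1-step ladder `L = {(i₁, j₁)}` on `n`: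
the span of the matrix units `e_{i,j}` (1-based) with `1 ≤ i ≤ i₁` and `j₁ ≤ j ≤ n`. -/
def ladderModule (F : Type*) [Field F] (n i₁ j₁ : ℕ) :
    Submodule F (Matrix (Fin n) (Fin n) F) :=
  Submodule.span F
    { A | ∃ i j : Fin n, (i : ℕ) + 1 ≤ i₁ ∧ j₁ ≤ (j : ℕ) + 1 ∧
      A = Matrix.single i j 1 }

open Module Submodule LinearMap

theorem Fin.ncard_setOf_add_one_le {n m : ℕ} (h : m ≤ n) :
    {i : Fin n | (i : ℕ) + 1 ≤ m}.ncard = m := by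
  classical
  simp [Set.ncard_eq_toFinset_card', Fin.card_filter_val_lt, h]

theorem Fin.ncard_setOf_le_add_one {n m : ℕ} :
    {j : Fin n | m ≤ (j : ℕ) + 1}.ncard = n - (m - 1) := by
  classical
  have hsplit := Finset.card_filter_add_card_filter_not (s := Finset.univ)
    (fun j : Fin n => (j : ℕ) < m - 1)
  rw [Fin.card_filter_val_lt, Finset.card_univ, Fintype.card_fin] at hsplit
  rw [Set.ncard_eq_toFinset_card', Set.toFinset_ofPred,
    Finset.filter_congr (q := fun j : Fin n => ¬ (j : ℕ) < m - 1) fun j _ => by omega]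
  omega

section

variable {F ι : Type*} [Field F] [DecidableEq ι]

variable (F) in
def matrixUnitSpan (R C : Set ι) : Submodule F (Matrix ι ι F) :=
  span F {A | ∃ i j, i ∈ R ∧ j ∈ C ∧ A = single i j 1}

theorem single_mem_matrixUnitSpan {R C : Set ι} {i j : ι} (hi : i ∈ R) (hj : j ∈ C) :
    single i j 1 ∈ matrixUnitSpan F R C :=
  subset_span ⟨i, j, hi, hj, rfl⟩

variable [Fintype ι]

theorem finrank_matrixUnitSpan (R C : Set ι) :
    finrank F (matrixUnitSpan F R C) = R.ncard * C.ncard := by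
  classical
  have hspan : matrixUnitSpan F R C = span F (stdBasis F ι ι '' R ×ˢ C) := by
    unfold matrixUnitSpan
    congr 1
    ext A
    simp [stdBasis_eq_single, and_assoc, @eq_comm _ A]
  rw [hspan, finrank_span_set_eq_card ((stdBasis F ι ι).linearIndepOn _).id_image,
    Set.toFinset_card, Fintype.card_eq_nat_card, Nat.card_coe_set_eq, ← Set.ncard_prod,
    Set.ncard_image_of_injective _ (stdBasis F ι ι).injective]

section bracket

variable {V : Submodule F (Matrix ι ι F)} (μ : V ⊗[F] V →ₗ[F] V)
  (hμ : ∀ x y : V, (μ (x ⊗ₜ y) : Matrix ι ι F) = x * y - y * x)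
include hμ

omit [DecidableEq ι] in
theorem trace_eq_zero_of_mem_range_bracket {z : V} (hz : z ∈ range μ) :
    trace (z : Matrix ι ι F) = 0 := by
  obtain ⟨t, rfl⟩ := hz
  induction t using TensorProduct.induction_on with
  | zero => simp
  | tmul x y => rw [hμ, trace_sub, Matrix.trace_mul_comm, sub_self]
  | add s t hs ht => simp only [map_add, Submodule.coe_add, trace_add, hs, ht, add_zero]

theorem finrank_range_bracket_lt {k : ι} (hk : single k k 1 ∈ V) :
    finrank F (range μ) < finrank F V := by
  refine Submodule.finrank_lt fun htop => one_ne_zero (α := F) ?_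
  have hmem : (⟨single k k 1, hk⟩ : V) ∈ range μ := htop ▸ mem_top
  simpa using trace_eq_zero_of_mem_range_bracket μ hμ hmem

end bracket

section matrixUnitSpan

variable {R C : Set ι}
  (μ : matrixUnitSpan F R C ⊗[F] matrixUnitSpan F R C →ₗ[F] matrixUnitSpan F R C)
  (hμ : ∀ x y : matrixUnitSpan F R C, (μ (x ⊗ₜ y) : Matrix ι ι F) = x * y - y * x)
include hμ

theorem matrixUnitSpan_le_map_range_bracket_sup {k : ι} (hkR : k ∈ R) (hkC : k ∈ C) :
    matrixUnitSpan F R C ≤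
      (range μ).map (matrixUnitSpan F R C).subtype ⊔ F ∙ single k k 1 := by
  refine span_le.2 ?_
  rintro _ ⟨i, j, hi, hj, rfl⟩
  have hbracket : single i k 1 * single k j 1 - single k j 1 * single i k (1 : F) ∈
      (range μ).map (matrixUnitSpan F R C).subtype :=
    ⟨μ (⟨_, single_mem_matrixUnitSpan hi hkC⟩ ⊗ₜ ⟨_, single_mem_matrixUnitSpan hkR hj⟩),
      mem_range_self _ _, hμ _ _⟩
  have hcorrection : single k j 1 * single i k (1 : F) ∈ F ∙ single k k 1 := by
    obtain rfl | hji := eq_or_ne j i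
    · simp
    · simp [hji]
  simpa using add_mem (mem_sup_left hbracket) (mem_sup_right hcorrection)

theorem finrank_range_bracket_add_one {k : ι} (hkR : k ∈ R) (hkC : k ∈ C) :
    finrank F (range μ) + 1 = R.ncard * C.ncard := by
  rw [← finrank_matrixUnitSpan (F := F)]
  refine le_antisymm (finrank_range_bracket_lt μ hμ (single_mem_matrixUnitSpan hkR hkC)) ?_
  calc finrank F (matrixUnitSpan F R C)
      ≤ finrank F ↥((range μ).map (matrixUnitSpan F R C).subtype ⊔ F ∙ single k k (1 : F)) :=
        finrank_mono (matrixUnitSpan_le_map_range_bracket_sup μ hμ hkR hkC)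
    _ ≤ finrank F ↥((range μ).map (matrixUnitSpan F R C).subtype) +
          finrank F ↥(F ∙ single k k (1 : F)) :=
        finrank_add_le_finrank_add_finrank _ _
    _ ≤ finrank F (range μ) + 1 :=
        add_le_add (finrank_map_le _ _) ((finrank_span_le_card _).trans (by simp))

theorem finrank_ker_bracket_add {k : ι} (hkR : k ∈ R) (hkC : k ∈ C) :
    finrank F (ker μ) + R.ncard * C.ncard = (R.ncard * C.ncard) ^ 2 + 1 := by
  have hrank := LinearMap.finrank_range_add_finrank_ker
    (V := matrixUnitSpan F R C ⊗[F] matrixUnitSpan F R C) μ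
  rw [finrank_tensorProduct, finrank_matrixUnitSpan] at hrank
  have := finrank_range_bracket_add_one μ hμ hkR hkC
  rw [sq]
  linarith

end matrixUnitSpan

end

theorem ker_bracket_ladderModule_finrank_general
    (F : Type*) [Field F] (n i₁ j₁ : ℕ) (hij : j₁ ≤ i₁)
    (n₁ n₂ n₃ : ℕ) (hn₁ : n₁ + 1 = j₁) (hn₂ : n₂ + j₁ = i₁ + 1) (hn₃ : n₃ + i₁ = n)
    (μ : ladderModule F n i₁ j₁ ⊗[F] ladderModule F n i₁ j₁ →ₗ[F] ladderModule F n i₁ j₁)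
    (hμ : ∀ x y : ladderModule F n i₁ j₁,
      ((μ (x ⊗ₜ y) : Matrix (Fin n) (Fin n) F)) =
        (x : Matrix (Fin n) (Fin n) F) * y - (y : Matrix (Fin n) (Fin n) F) * x) :
    (Cardinal.toNat (Module.rank F ↥(LinearMap.ker μ)) : ℤ) =
      (n₁ : ℤ) ^ 2 * n₂ ^ 2 + 2 * n₁ ^ 2 * n₂ * n₃ + n₁ ^ 2 * n₃ ^ 2
        + 2 * n₁ * n₂ ^ 3 + 4 * n₁ * n₂ ^ 2 * n₃ + 2 * n₁ * n₂ * n₃ ^ 2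
        - n₁ * n₂ - n₁ * n₃
        + n₂ ^ 4 + 2 * n₂ ^ 3 * n₃ + n₂ ^ 2 * n₃ ^ 2 - n₂ ^ 2 - n₂ * n₃ + 1 := by
  -- `ladderModule F n i₁ j₁` is by definition a `matrixUnitSpan`; the 0-based pivot index is `n₁`
  have hker := finrank_ker_bracket_add (R := {i : Fin n | (i : ℕ) + 1 ≤ i₁})
    (C := {j : Fin n | j₁ ≤ (j : ℕ) + 1}) μ hμ (k := ⟨n₁, by omega⟩)
    (by simp only [Set.mem_ofPred_eq]; omega) (by simp only [Set.mem_ofPred_eq]; omega)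
  have hdim : i₁ * (n - (j₁ - 1)) = (n₁ + n₂) * (n₂ + n₃) := by
    rw [show n - (j₁ - 1) = n₂ + n₃ by omega, show i₁ = n₁ + n₂ by omega]
  rw [Fin.ncard_setOf_add_one_le (by omega), Fin.ncard_setOf_le_add_one, hdim] at hker
  zify at hker
  exact (eq_sub_of_add_eq hker).trans (by ring)

/-- The dimension (`Cardinal.toNat` of the `Module.rank`, i.e. the finrank) of the
kernel of the bracket-induced map `μ : M_L ⊗ M_L → M_L` for a one-step ladder with
`i₁ ≥ j₁`, where `n₁ = j₁ - 1`, `n₂ = i₁ - j₁ + 1`, `n₃ = n - i₁`. -/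
theorem ker_bracket_ladderModule_finrank
    (F : Type*) [Field F] (n i₁ j₁ : ℕ) (hn : 1 ≤ n)
    (hi₁ : 1 ≤ i₁) (hi₁n : i₁ ≤ n) (hj₁ : 1 ≤ j₁) (hj₁n : j₁ ≤ n) (hij : j₁ ≤ i₁)
    (n₁ n₂ n₃ : ℕ) (hn₁ : n₁ + 1 = j₁) (hn₂ : n₂ + j₁ = i₁ + 1) (hn₃ : n₃ + i₁ = n)
    (μ : ladderModule F n i₁ j₁ ⊗[F] ladderModule F n i₁ j₁ →ₗ[F] ladderModule F n i₁ j₁)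
    (hμ : ∀ x y : ladderModule F n i₁ j₁,
      ((μ (x ⊗ₜ y) : Matrix (Fin n) (Fin n) F)) =
        (x : Matrix (Fin n) (Fin n) F) * y - (y : Matrix (Fin n) (Fin n) F) * x) :
    (Cardinal.toNat (Module.rank F ↥(LinearMap.ker μ)) : ℤ) =
      (n₁ : ℤ) ^ 2 * n₂ ^ 2 + 2 * n₁ ^ 2 * n₂ * n₃ + n₁ ^ 2 * n₃ ^ 2
        + 2 * n₁ * n₂ ^ 3 + 4 * n₁ * n₂ ^ 2 * n₃ + 2 * n₁ * n₂ * n₃ ^ 2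
        - n₁ * n₂ - n₁ * n₃
        + n₂ ^ 4 + 2 * n₂ ^ 3 * n₃ + n₂ ^ 2 * n₃ ^ 2 - n₂ ^ 2 - n₂ * n₃ + 1 :=
  ker_bracket_ladderModule_finrank_general F n i₁ j₁ hij n₁ n₂ n₃ hn₁ hn₂ hn₃ μ hμ
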